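/- In the two-component Gaussian mixture, if the random condition ŷ ∈ {0,1} is drawn with q(ŷ=1) = p₁(z)/(p₀(z)+p₁(z)), then the expected ICG update direction equals the exact CFG direction: 𝔼_q[∇_z log p₀(z) − ∇_z log p_{ŷ}(z)] = ∇_z log p₀(z) − ∇_z log p(z). -/

import Mathlib

open MeasureTheory Real

section Aux

variable {F : Type*} [NormedAddCommGroup F] [InnerProductSpace ℝ F]

lemma innerSL_smul (a : ℝ) (v : F) : innerSL ℝ (a • v) = a • innerSL ℝ v := by
  ext y; simp [real_inner_smul_left]

lemma gauss_hasFDerivAt (K c : ℝ) (hc : 0 < c) (μ z : F) :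
    HasFDerivAt (fun z' : F => K * Real.exp (-‖z' - μ‖ ^ 2 / (2 * c)))
      (innerSL ℝ (((K * Real.exp (-‖z - μ‖ ^ 2 / (2 * c))) / c) • (μ - z))) z := by
  have h1 : HasFDerivAt (fun z' : F => ‖z' - μ‖ ^ 2)
      ((2 : ℕ) • (innerSL ℝ (z - μ)).comp (ContinuousLinearMap.id ℝ F)) z := by
    simpa using ((hasFDerivAt_id z).sub_const μ).norm_sq
  have h2 : HasFDerivAt (fun z' : F => -‖z' - μ‖ ^ 2 / (2 * c))
      ((-(2 * c)⁻¹) • ((2 : ℕ) • (innerSL ℝ (z - μ)).comp (ContinuousLinearMap.id ℝ F))) z := by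
    have := h1.const_mul (-(2 * c)⁻¹)
    refine this.congr_of_eventuallyEq (Filter.Eventually.of_forall fun z' => ?_)
    field_simp
  have h3 := (h2.exp).const_mul K
  refine h3.congr_fderiv (Eq.symm ?_)
  ext y
  simp only [innerSL_apply_apply, ContinuousLinearMap.smul_apply, ContinuousLinearMap.coe_smul',
    Pi.smul_apply, ContinuousLinearMap.coe_comp', Function.comp_apply,
    ContinuousLinearMap.coe_id', id_eq, real_inner_smul_left, smul_eq_mul]
  rw [show (μ - z : F) = -(z - μ) by abel, inner_neg_left]
  field_simp
  ring

lemma gauss_gradient_log (K c : ℝ) (hK : 0 < K) (hc : 0 < c) (μ z : F) [CompleteSpace F] :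
    gradient (fun z' : F => Real.log (K * Real.exp (-‖z' - μ‖ ^ 2 / (2 * c)))) z
      = c⁻¹ • (μ - z) := by
  have hp : 0 < K * Real.exp (-‖z - μ‖ ^ 2 / (2 * c)) := by positivity
  have h := (gauss_hasFDerivAt K c hc μ z).log hp.ne'
  have h2 : HasGradientAt (fun z' : F => Real.log (K * Real.exp (-‖z' - μ‖ ^ 2 / (2 * c))))
      (c⁻¹ • (μ - z)) z := by
    rw [hasGradientAt_iff_hasFDerivAt]
    refine h.congr_fderiv (Eq.symm ?_)
    rw [← innerSL_smul, smul_smul]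
    rw [show ((K * Real.exp (-‖z - μ‖ ^ 2 / (2 * c)))⁻¹ * ((K * Real.exp (-‖z - μ‖ ^ 2 / (2 * c))) / c)) = c⁻¹ by field_simp]
    ext y
    simp [InnerProductSpace.toDual_apply_apply]
  exact h2.gradient

end Aux

/-- In the two-component Gaussian mixture, if the random condition `ŷ ∈ {0,1}` is drawn
with `q(ŷ = 1) = p₁(z)/(p₀(z) + p₁(z))` (and `q(ŷ = 0) = p₀(z)/(p₀(z) + p₁(z))`), then
the expected ICG update direction equals the exact CFG direction:
`𝔼_q[∇_z log p₀(z) − ∇_z log p_ŷ(z)] = ∇_z log p₀(z) − ∇_z log p(z)`,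
where `p = (p₀ + p₁)/2`. -/
theorem icg_unbiased_gaussian_mixture
    (d : ℕ) (μ₀ μ₁ : EuclideanSpace ℝ (Fin d)) (σ : ℝ)
    (p₀ p₁ : EuclideanSpace ℝ (Fin d) → ℝ)
    (hp₀ : ∀ z, p₀ z = (2 * Real.pi * (1 + σ ^ 2)) ^ (-(d : ℝ) / 2) *
      Real.exp (-‖z - μ₀‖ ^ 2 / (2 * (1 + σ ^ 2))))
    (hp₁ : ∀ z, p₁ z = (2 * Real.pi * (1 + σ ^ 2)) ^ (-(d : ℝ) / 2) *
      Real.exp (-‖z - μ₁‖ ^ 2 / (2 * (1 + σ ^ 2))))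
    (z : EuclideanSpace ℝ (Fin d)) :
    (p₀ z / (p₀ z + p₁ z)) •
          (gradient (fun z' => Real.log (p₀ z')) z -
            gradient (fun z' => Real.log (p₀ z')) z) +
        (p₁ z / (p₀ z + p₁ z)) •
          (gradient (fun z' => Real.log (p₀ z')) z -
            gradient (fun z' => Real.log (p₁ z')) z) =
      gradient (fun z' => Real.log (p₀ z')) z -
        gradient (fun z' => Real.log ((p₀ z' + p₁ z') / 2)) z := by
  set c : ℝ := 1 + σ ^ 2 with hcdef
  have hc : 0 < c := by positivity
  set K : ℝ := (2 * Real.pi * c) ^ (-(d : ℝ) / 2) with hKdef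
  have hK : 0 < K := by
    apply Real.rpow_pos_of_pos
    positivity
  have ha₀ : 0 < p₀ z := by rw [hp₀]; positivity
  have ha₁ : 0 < p₁ z := by rw [hp₁]; positivity
  -- gradients of the component log-densities
  have hg₀ : gradient (fun z' => Real.log (p₀ z')) z = c⁻¹ • (μ₀ - z) := by
    simp only [hp₀]; exact gauss_gradient_log K c hK hc μ₀ z
  have hg₁ : gradient (fun z' => Real.log (p₁ z')) z = c⁻¹ • (μ₁ - z) := by
    simp only [hp₁]; exact gauss_gradient_log K c hK hc μ₁ z
  -- gradient of the mixture log-density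
  have hs : 0 < p₀ z + p₁ z := by linarith
  have hmix : gradient (fun z' => Real.log ((p₀ z' + p₁ z') / 2)) z
      = (p₀ z + p₁ z)⁻¹ • ((p₀ z / c) • (μ₀ - z) + (p₁ z / c) • (μ₁ - z)) := by
    have hsum : HasFDerivAt (fun z' => (p₀ z' + p₁ z') / 2)
        ((2 : ℝ)⁻¹ • (innerSL ℝ ((p₀ z / c) • (μ₀ - z)) + innerSL ℝ ((p₁ z / c) • (μ₁ - z)))) z := by
      have h0 := gauss_hasFDerivAt K c hc μ₀ z
      have h1 := gauss_hasFDerivAt K c hc μ₁ z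
      have := ((h0.add h1).const_mul (2 : ℝ)⁻¹)
      have heq : (fun z' => (p₀ z' + p₁ z') / 2)
          = (fun z' => (2 : ℝ)⁻¹ * (K * Real.exp (-‖z' - μ₀‖ ^ 2 / (2 * c))
              + K * Real.exp (-‖z' - μ₁‖ ^ 2 / (2 * c)))) := by
        funext z'; rw [hp₀ z', hp₁ z']; ring
      rw [heq]
      refine this.congr_fderiv (Eq.symm ?_)
      rw [hp₀, hp₁]
    have hval : (fun z' => (p₀ z' + p₁ z') / 2) z ≠ 0 := by simp; linarith
    have h := hsum.log hval
    have h2 : HasGradientAt (fun z' => Real.log ((p₀ z' + p₁ z') / 2))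
        ((p₀ z + p₁ z)⁻¹ • ((p₀ z / c) • (μ₀ - z) + (p₁ z / c) • (μ₁ - z))) z := by
      rw [hasGradientAt_iff_hasFDerivAt]
      refine h.congr_fderiv (Eq.symm ?_)
      ext y
      simp only [InnerProductSpace.toDual_apply_apply, ContinuousLinearMap.smul_apply,
        ContinuousLinearMap.add_apply, innerSL_apply_apply, real_inner_smul_left, inner_add_left,
        smul_eq_mul]
      field_simp
    exact h2.gradient
  rw [hg₀, hg₁, hmix]
  rw [sub_self, smul_zero, zero_add]
  -- now pure module algebra
  set u : EuclideanSpace ℝ (Fin d) := μ₀ - z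
  set v : EuclideanSpace ℝ (Fin d) := μ₁ - z
  match_scalars <;> field_simp <;> ring
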